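/- Let k > 4 be an integer and let U₁, U₂, U₃, V₂, V₃ ⊆ ℝ³ be the pieces of the surfaces of Example 1. There exist ε > 0 and constants c₁, c₂ > 0 such that for every point p = (x,y,t) ∈ U₂ ∪ U₃ ∪ V₂ ∪ V₃ with 0 < t ≤ ε, one has c₁·t ≤ dist(p, U₁) ≤ c₂·t, where dist(p, U₁) denotes the infimum of Euclidean distances from p to points of U₁. -/

import Mathlib

open Set Metric

noncomputable section

/-- The piece `U₁` of Example 1 (coordinates `x = p 0`, `y = p 1`, `t = p 2`). -/
def PieceU1 (k : ℕ) : Set (EuclideanSpace ℝ (Fin 3)) :=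
  {p | ((p 0 - p 2) ^ 2 + p 1 ^ 2 - p 2 ^ 2) * ((p 0 + p 2) ^ 2 + p 1 ^ 2 - p 2 ^ 2) = p 2 ^ k ∧
        0 ≤ p 2}

/-- The cone `U₂` over the circle `(x-1)² + (y-1/2)² = 1/16`. -/
def PieceU2 : Set (EuclideanSpace ℝ (Fin 3)) :=
  {p | (p 0 - p 2) ^ 2 + (p 1 - p 2 / 2) ^ 2 = p 2 ^ 2 / 16 ∧ 0 ≤ p 2}

/-- The cone `U₃` over the circle `(x-1)² + (y+1/2)² = 1/16`. -/
def PieceU3 : Set (EuclideanSpace ℝ (Fin 3)) :=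
  {p | (p 0 - p 2) ^ 2 + (p 1 + p 2 / 2) ^ 2 = p 2 ^ 2 / 16 ∧ 0 ≤ p 2}

/-- The cone `V₂` over the circle `(x-1)² + y² = 1/16`. -/
def PieceV2 : Set (EuclideanSpace ℝ (Fin 3)) :=
  {p | (p 0 - p 2) ^ 2 + p 1 ^ 2 = p 2 ^ 2 / 16 ∧ 0 ≤ p 2}

/-- The cone `V₃` over the circle `(x+1)² + y² = 1/16`. -/
def PieceV3 : Set (EuclideanSpace ℝ (Fin 3)) :=
  {p | (p 0 + p 2) ^ 2 + p 1 ^ 2 = p 2 ^ 2 / 16 ∧ 0 ≤ p 2}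

/-!
The quartic defining `U₁` equals `(X² + Y² - 2|X|T)(X² + Y² + 2|X|T)`, so it is negative exactly
when `(|X|, Y)` lies strictly inside the disc of radius `T` about `(T, 0)`; on `U₁` it equals
`T ^ k ≥ 0`. At height `t` every piece lies in the disc of radius `3t/4` about `(±t, 0)`, which keeps
a margin proportional to `t` from that circle, so `U₁` stays at distance `≥ t/1000`. Conversely the
origin lies on `U₁`, and the pieces are cones, so their distance to it is `O(t)`.
-/

def DiscCone : Set (EuclideanSpace ℝ (Fin 3)) :=
  {p | (|p 0| - p 2) ^ 2 + p 1 ^ 2 ≤ 9 / 16 * p 2 ^ 2}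

lemma pieces_subset_discCone : PieceU2 ∪ PieceU3 ∪ PieceV2 ∪ PieceV3 ⊆ DiscCone := by
  rintro p (((⟨hp, ht⟩ | ⟨hp, ht⟩) | ⟨hp, ht⟩) | ⟨hp, ht⟩) <;> simp only [DiscCone, mem_ofPred_eq]
  · rw [abs_of_nonneg (by nlinarith [sq_nonneg (p 1 - p 2 / 2)])]
    nlinarith [sq_nonneg (p 1 - p 2 / 2)]
  · rw [abs_of_nonneg (by nlinarith [sq_nonneg (p 1 + p 2 / 2)])]
    nlinarith [sq_nonneg (p 1 + p 2 / 2)]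
  · rw [abs_of_nonneg (by nlinarith [sq_nonneg (p 1)])]
    nlinarith
  · rw [abs_of_nonpos (by nlinarith [sq_nonneg (p 1)])]
    nlinarith

lemma quartic_neg_of_near_disc {x y t X Y T : ℝ} (ht : 0 < t)
    (hxy : (|x| - t) ^ 2 + y ^ 2 ≤ 9 / 16 * t ^ 2)
    (hX : |X - x| ≤ t / 1000) (hY : |Y - y| ≤ t / 1000) (hT : |T - t| ≤ t / 1000) :
    ((X - T) ^ 2 + Y ^ 2 - T ^ 2) * ((X + T) ^ 2 + Y ^ 2 - T ^ 2) < 0 := by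
  have hA := abs_le.1 ((abs_abs_sub_abs_le_abs_sub X x).trans hX)
  rw [abs_le] at hY hT
  have hfactor : ((X - T) ^ 2 + Y ^ 2 - T ^ 2) * ((X + T) ^ 2 + Y ^ 2 - T ^ 2) =
      (|X| ^ 2 + Y ^ 2 - 2 * |X| * T) * (|X| ^ 2 + Y ^ 2 + 2 * |X| * T) := by
    linear_combination (X ^ 2 + |X| ^ 2 + 2 * Y ^ 2 - 4 * T ^ 2) * (sq_abs X).symm
  have hx : t / 4 ≤ |x| := by nlinarith [sq_nonneg y]
  rw [hfactor]
  apply mul_neg_of_neg_of_pos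
  -- `2uv ≤ u²/10 + 10v²` absorbs the perturbation into the margin `1 - 9/16`.
  · nlinarith [sq_nonneg ((|x| - t) / 10 - (|X| - |x| - (T - t))), sq_nonneg (y / 10 - (Y - y)),
      mul_le_mul hA.2 hA.2, sq_nonneg (T - t), sq_nonneg (Y - y), sq_nonneg (|X| - |x| - (T - t))]
  · nlinarith [abs_nonneg X, sq_nonneg Y]

lemma zero_mem_pieceU1 {k : ℕ} (hk : k ≠ 0) : (0 : EuclideanSpace ℝ (Fin 3)) ∈ PieceU1 k := by
  simp [PieceU1, hk]

lemma le_infDist_pieceU1 {k : ℕ} (hk : k ≠ 0) {p : EuclideanSpace ℝ (Fin 3)} (ht : 0 < p 2)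
    (hp : p ∈ DiscCone) : p 2 / 1000 ≤ infDist p (PieceU1 k) := by
  refine (le_infDist ⟨0, zero_mem_pieceU1 hk⟩).2 fun q ⟨hq, hq₂⟩ ↦ ?_
  by_contra! hclose
  have hcoord (i : Fin 3) : |q i - p i| ≤ p 2 / 1000 := by
    rw [← Real.dist_eq, dist_comm]
    exact (PiLp.dist_apply_le p q i).trans hclose.le
  have hneg := quartic_neg_of_near_disc ht hp (hcoord 0) (hcoord 1) (hcoord 2)
  linarith [pow_nonneg hq₂ k]

lemma norm_le_of_mem_discCone {p : EuclideanSpace ℝ (Fin 3)} (ht : 0 ≤ p 2) (hp : p ∈ DiscCone) :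
    ‖p‖ ≤ 3 * p 2 := by
  rw [← abs_of_nonneg (norm_nonneg p), ← abs_of_nonneg (by positivity : 0 ≤ 3 * p 2), ← sq_le_sq,
    EuclideanSpace.real_norm_sq_eq, Fin.sum_univ_three]
  nlinarith [sq_abs (p 0), sq_nonneg (p 1), hp.out]

/-- there exist `ε > 0` and constants `c₁, c₂ > 0` such that every point
`p = (x,y,t) ∈ U₂ ∪ U₃ ∪ V₂ ∪ V₃` with `0 < t ≤ ε` satisfies
`c₁ · t ≤ dist(p, U₁) ≤ c₂ · t`. -/
theorem example1_distance_to_U1 (k : ℕ) (hk : 4 < k) :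
    ∃ ε > (0 : ℝ), ∃ c₁ > (0 : ℝ), ∃ c₂ > (0 : ℝ),
      ∀ p ∈ PieceU2 ∪ PieceU3 ∪ PieceV2 ∪ PieceV3,
        0 < p 2 → p 2 ≤ ε →
          c₁ * p 2 ≤ Metric.infDist p (PieceU1 k) ∧
          Metric.infDist p (PieceU1 k) ≤ c₂ * p 2 := by
  have hk₀ : k ≠ 0 := by omega
  refine ⟨1, one_pos, 1 / 1000, by norm_num, 3, three_pos, fun p hp ht _ ↦ ⟨?_, ?_⟩⟩
  · linarith [le_infDist_pieceU1 hk₀ ht (pieces_subset_discCone hp)]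
  · calc infDist p (PieceU1 k) ≤ dist p 0 := infDist_le_dist_of_mem (zero_mem_pieceU1 hk₀)
      _ = ‖p‖ := dist_zero_right p
      _ ≤ 3 * p 2 := norm_le_of_mem_discCone ht.le (pieces_subset_discCone hp)
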